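/- arXiv:1612.09569 — 4 statements merged into one kernel-verified Lean document; each statement's English description precedes it below -/
import Mathlib

section
/- Let μ be a finite positive Borel measure on the circle S¹. Then the limit lim_{N→∞} (1/(2N+1)) ∑_{n=-N}^{N} |μ̂(n)|² exists and equals ∑_{t ∈ S¹ : μ({t}) ≠ 0} μ({t})², the sum of the squares of the masses of the atoms of μ. -/
/-!
By Fubini, `|μ̂(n)|² = μ̂(n) · conj μ̂(n) = ∫∫ e_n(x - y) dμ(x) dμ(y)`, so the Cesàro average is
the integral over `μ ⊗ μ` of `D_N(x - y) / (2N + 1)`, where `D_N` is the Dirichlet kernel. These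
kernels are bounded by `1`, equal `1` at `0`, and tend to `0` elsewhere since `D_N` is a geometric
sum of ratio `e_1(x) ≠ 1`. By dominated convergence the averages tend to the `μ ⊗ μ`-mass of the
diagonal, which is the sum of the squares of the atoms of `μ`.
-/

open MeasureTheory Filter Finset ComplexConjugate Topology

section Fourier

variable {T : ℝ}

lemma fourier_sub_apply (n : ℤ) (x y : AddCircle T) :
    fourier n (x - y) = fourier n x * conj (fourier n y) := by
  rw [fourier_apply, smul_sub, sub_eq_add_neg, AddCircle.toCircle_add, Circle.coe_mul,
    fourier_neg', ← fourier_apply]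

lemma norm_fourier_apply (n : ℤ) (x : AddCircle T) : ‖fourier n x‖ = 1 := by
  rw [fourier_apply]; exact Circle.norm_coe _

lemma fourier_apply_eq_zpow (n : ℤ) (x : AddCircle T) : fourier n x = fourier 1 x ^ n := by
  rw [fourier_apply, fourier_one, AddCircle.toCircle_zsmul, Circle.coe_zpow]

lemma fourier_one_apply_eq_one_iff [hT : Fact (0 < T)] {x : AddCircle T} :
    fourier 1 x = 1 ↔ x = 0 := by
  rw [fourier_one, Circle.coe_eq_one, ← AddCircle.toCircle_zero,
    (AddCircle.injective_toCircle hT.out.ne').eq_iff]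

end Fourier

lemma Int.card_Icc_neg_self (N : ℕ) : #(Icc (-(N : ℤ)) N) = 2 * N + 1 := by
  rw [Int.card_Icc]; omega

section GeomSum

variable {𝕜 : Type*} [NormedField 𝕜]

lemma sum_Icc_neg_zpow_eq (z : 𝕜) (hz : z ≠ 0) (N : ℕ) :
    ∑ n ∈ Icc (-(N : ℤ)) N, z ^ n = z ^ (-(N : ℤ)) * ∑ k ∈ range (2 * N + 1), z ^ k := by
  rw [mul_sum]
  refine sum_nbij' (fun n ↦ (n + N).toNat) (fun k ↦ (k : ℤ) - N) ?_ ?_ ?_ ?_ ?_ <;>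
    intro n hn <;> simp only [mem_Icc, mem_range] at hn ⊢
  all_goals try omega
  rw [← zpow_natCast, Int.toNat_of_nonneg (by omega), ← zpow_add₀ hz]
  congr 1; omega

lemma norm_sum_Icc_neg_zpow_le (z : 𝕜) (hz : ‖z‖ = 1) (hz₁ : z ≠ 1) (N : ℕ) :
    ‖∑ n ∈ Icc (-(N : ℤ)) N, z ^ n‖ ≤ 2 / ‖z - 1‖ := by
  have hz₀ : z ≠ 0 := by rintro rfl; simp at hz
  rw [sum_Icc_neg_zpow_eq z hz₀, geom_sum_eq hz₁, norm_mul, norm_zpow, hz, one_zpow, one_mul,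
    norm_div]
  gcongr
  calc ‖z ^ (2 * N + 1) - 1‖ ≤ ‖z ^ (2 * N + 1)‖ + ‖(1 : 𝕜)‖ := norm_sub_le _ _
    _ = 2 := by rw [norm_pow, hz, one_pow, norm_one]; norm_num

end GeomSum

section DirichletMean

variable {T : ℝ}

/-- `D_N(x) / (2N + 1)`, with `D_N` the Dirichlet kernel. -/
noncomputable def dirichletMean (N : ℕ) (x : AddCircle T) : ℂ :=
  ((2 * N + 1 : ℕ) : ℂ)⁻¹ * ∑ n ∈ Icc (-(N : ℤ)) N, fourier n x

lemma continuous_dirichletMean (N : ℕ) : Continuous (dirichletMean (T := T) N) :=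
  continuous_const.mul (continuous_finsetSum _ fun n _ ↦ (fourier n).continuous)

lemma norm_dirichletMean_le_one (N : ℕ) (x : AddCircle T) : ‖dirichletMean N x‖ ≤ 1 := by
  calc ‖dirichletMean N x‖
      ≤ ((2 * N + 1 : ℕ) : ℝ)⁻¹ * ∑ n ∈ Icc (-(N : ℤ)) N, ‖fourier n x‖ := by
        rw [dirichletMean, norm_mul, norm_inv, Complex.norm_natCast]
        gcongr
        exact norm_sum_le _ _
    _ = 1 := by
        simp only [norm_fourier_apply, sum_const, Int.card_Icc_neg_self, nsmul_eq_mul, mul_one]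
        exact inv_mul_cancel₀ (by positivity)

lemma dirichletMean_zero_right (N : ℕ) : dirichletMean N (0 : AddCircle T) = 1 := by
  simp only [dirichletMean, fourier_eval_zero, sum_const, Int.card_Icc_neg_self, nsmul_eq_mul,
    mul_one]
  exact inv_mul_cancel₀ (Nat.cast_ne_zero.mpr (2 * N).succ_ne_zero)

lemma tendsto_dirichletMean_of_ne_zero [Fact (0 < T)] {x : AddCircle T} (hx : x ≠ 0) :
    Tendsto (fun N ↦ dirichletMean N x) atTop (𝓝 0) := by
  set z := fourier 1 x
  have hz₁ : z ≠ 1 := fourier_one_apply_eq_one_iff.not.mpr hx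
  have hbound (N : ℕ) : ‖dirichletMean N x‖ ≤ 2 / ‖z - 1‖ / ((2 * N + 1 : ℕ) : ℝ) := by
    rw [dirichletMean, norm_mul, norm_inv, Complex.norm_natCast, inv_mul_eq_div]
    gcongr
    rw [sum_congr rfl fun n _ ↦ fourier_apply_eq_zpow n x]
    exact norm_sum_Icc_neg_zpow_le z (norm_fourier_apply 1 x) hz₁ N
  refine squeeze_zero_norm hbound (tendsto_const_nhds.div_atTop ?_)
  exact tendsto_natCast_atTop_atTop.comp
    (tendsto_atTop_mono (fun N ↦ show N ≤ 2 * N + 1 by omega) tendsto_id)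

lemma tendsto_dirichletMean [Fact (0 < T)] (x : AddCircle T) :
    Tendsto (fun N ↦ dirichletMean N x) atTop (𝓝 (if x = 0 then 1 else 0)) := by
  split_ifs with hx
  · simp only [hx, dirichletMean_zero_right, tendsto_const_nhds]
  · exact tendsto_dirichletMean_of_ne_zero hx

end DirichletMean

section Atoms

variable {α : Type*} [MeasurableSpace α] (μ : Measure α) [SFinite μ]

lemma Measure.countable_setOf_measure_singleton_ne_zero [MeasurableSingletonClass α] :
    {t : α | μ {t} ≠ 0}.Countable := by
  simpa [Set.ofPred_eq_eq_singleton, pos_iff_ne_zero] using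
    Measure.countable_meas_level_set_pos (μ := μ) measurable_id

lemma Measure.prod_self_diagonal [MeasurableEq α] :
    μ.prod μ (Set.diagonal α) = ∑' t : {t : α // μ {t} ≠ 0}, μ {t.val} ^ 2 := by
  have hslice (x : α) : Prod.mk x ⁻¹' Set.diagonal α = {x} := by ext; simp [eq_comm]
  calc μ.prod μ (Set.diagonal α) = ∫⁻ x, μ {x} ∂μ := by
        simp only [Measure.prod_apply measurableSet_diagonal, hslice]
    _ = ∫⁻ x in {t | μ {t} ≠ 0}, μ {x} ∂μ := (setLIntegral_eq_of_support_subset subset_rfl).symm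
    _ = ∑' t : {t : α // μ {t} ≠ 0}, μ {t.val} ^ 2 := by
        simp only [lintegral_countable _ (Measure.countable_setOf_measure_singleton_ne_zero μ), sq]
        rfl

lemma Measure.real_prod_self_diagonal [MeasurableEq α] [IsFiniteMeasure μ] :
    (μ.prod μ).real (Set.diagonal α) = ∑' t : {t : α // μ {t} ≠ 0}, μ.real {t.val} ^ 2 := by
  rw [measureReal_def, Measure.prod_self_diagonal, ENNReal.tsum_toReal_eq fun _ ↦ by finiteness]
  simp only [ENNReal.toReal_pow, measureReal_def]

end Atoms

section Measure

variable {T : ℝ} (μ ν : Measure (AddCircle T)) [IsFiniteMeasure μ] [IsFiniteMeasure ν]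

lemma integral_fourier_sub_prod (n : ℤ) :
    ∫ p, fourier n (p.1 - p.2) ∂μ.prod ν =
      (∫ t, fourier n t ∂μ) * conj (∫ t, fourier n t ∂ν) := by
  simp_rw [fourier_sub_apply]
  rw [← integral_conj, ← integral_prod_mul]

lemma integral_dirichletMean_sub_prod (N : ℕ) :
    ∫ p, dirichletMean N (p.1 - p.2) ∂μ.prod ν = ((2 * N + 1 : ℕ) : ℂ)⁻¹ *
      ∑ n ∈ Icc (-(N : ℤ)) N, (∫ t, fourier n t ∂μ) * conj (∫ t, fourier n t ∂ν) := by
  have hint (n : ℤ) :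
      Integrable (fun p : AddCircle T × AddCircle T ↦ fourier n (p.1 - p.2)) (μ.prod ν) :=
    .of_bound ((fourier n).continuous.comp continuous_sub).aestronglyMeasurable 1
      (.of_forall fun p ↦ (norm_fourier_apply n _).le)
  simp only [dirichletMean, integral_const_mul, integral_finsetSum _ fun n _ ↦ hint n,
    integral_fourier_sub_prod]

lemma tendsto_integral_dirichletMean_sub_prod [Fact (0 < T)] :
    Tendsto (fun N ↦ ∫ p, dirichletMean N (p.1 - p.2) ∂μ.prod ν) atTop
      (𝓝 ((μ.prod ν).real (Set.diagonal (AddCircle T)) : ℂ)) := by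
  have hlim (p : AddCircle T × AddCircle T) : Tendsto (fun N ↦ dirichletMean N (p.1 - p.2))
      atTop (𝓝 ((Set.diagonal _).indicator (fun _ ↦ (1 : ℂ)) p)) := by
    simpa [Set.indicator_apply, sub_eq_zero] using tendsto_dirichletMean (p.1 - p.2)
  have := tendsto_integral_of_dominated_convergence (fun _ ↦ 1)
    (fun N ↦ ((continuous_dirichletMean N).comp continuous_sub).aestronglyMeasurable)
    (integrable_const (μ := μ.prod ν) 1)
    (fun N ↦ .of_forall fun p ↦ norm_dirichletMean_le_one N _) (.of_forall hlim)
  rwa [integral_indicator_const _ measurableSet_diagonal, Complex.real_smul, mul_one] at this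

end Measure

/-- **Wiener's theorem.** For a finite positive Borel measure `μ` on the circle `S¹ = ℝ/ℤ`,
the symmetric Cesàro averages of `|μ̂(n)|²` converge to the sum of the squares of the masses
of the atoms of `μ`. -/
theorem wiener_atoms (μ : Measure (AddCircle (1 : ℝ))) [IsFiniteMeasure μ] :
    Tendsto
      (fun N : ℕ => (1 / (2 * (N : ℝ) + 1)) *
        ∑ n ∈ Finset.Icc (-(N : ℤ)) (N : ℤ), ‖∫ t, fourier n t ∂μ‖ ^ 2)
      atTop
      (nhds (∑' t : {t : AddCircle (1 : ℝ) // μ {t} ≠ 0}, (μ {t.val}).toReal ^ 2)) := by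
  have h := tendsto_integral_dirichletMean_sub_prod μ μ
  simp only [integral_dirichletMean_sub_prod, Complex.mul_conj, Complex.normSq_eq_norm_sq,
    Measure.real_prod_self_diagonal] at h
  rw [← tendsto_ofReal_iff]
  push_cast at h ⊢
  simpa only [one_div, measureReal_def] using h
end

section
/- A finite positive Borel measure μ on the circle S¹ is non-atomic if and only if lim_{N→∞} (1/(2N+1)) ∑_{n=-N}^{N} |μ̂(n)|² = 0. -/
/-!
By Fubini, `(2N+1)⁻¹ ∑_{|n| ≤ N} |μ̂(n)|²` is the integral over `μ × μ` of `(2N+1)⁻¹ D_N(s - t)`,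
where `D_N` is the Dirichlet kernel. Summing the geometric series gives
`|D_N(x)| ≤ 2 / |toCircle x - 1|` for `x ≠ 0`, while `D_N(0) = 2N + 1`; so the normalised kernel
tends boundedly to the indicator of `0`, and by dominated convergence the averages tend to
`(μ × μ)(diagonal) = ∑ₜ μ({t})²`, which vanishes exactly when `μ` has no atoms.
-/

open MeasureTheory Filter Finset
open scoped ComplexConjugate Topology

namespace Finset

lemma card_Icc_neg_self (N : ℕ) : #(Icc (-(N : ℤ)) N) = 2 * N + 1 := by
  rw [Int.card_Icc]; omega

lemma sum_Icc_neg_self_eq_sum_range {M : Type*} [AddCommMonoid M] (f : ℤ → M) (N : ℕ) :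
    ∑ n ∈ Icc (-(N : ℤ)) N, f n = ∑ k ∈ range (2 * N + 1), f (k - N) := by
  refine sum_nbij' (fun n => (n + N).toNat) (fun k => (k : ℤ) - N) ?_ ?_ ?_ ?_ ?_ <;>
    intro a ha <;> simp only [mem_Icc, mem_range] at ha ⊢ <;> first | omega | (congr 1; omega)

end Finset

namespace MeasureTheory.Measure

lemma prod_self_diagonal_eq_zero_iff {α : Type*} [MeasurableSpace α] [MeasurableEq α]
    (μ : Measure α) [SFinite μ] : μ.prod μ (Set.diagonal α) = 0 ↔ ∀ x, μ {x} = 0 := by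
  constructor
  · intro h x
    have hle : μ.prod μ ({x} ×ˢ {x}) ≤ μ.prod μ (Set.diagonal α) :=
      measure_mono (by simp [Set.diagonal])
    rw [prod_prod, h, nonpos_iff_eq_zero, mul_self_eq_zero] at hle
    exact hle
  · intro h
    rw [measure_prod_null measurableSet_diagonal]
    refine Eventually.of_forall fun x => ?_
    simpa [Set.preimage, Set.diagonal, eq_comm] using h x

end MeasureTheory.Measure

namespace AddCircle

variable {T : ℝ}

lemma fourier_apply_eq_zpow (n : ℤ) (x : AddCircle T) : fourier n x = (toCircle x : ℂ) ^ n := by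
  rw [fourier_apply, toCircle_zsmul, Circle.coe_zpow]

lemma fourier_sub (n : ℤ) (x y : AddCircle T) :
    fourier n (x - y) = fourier n x * conj (fourier n y) := by
  rw [fourier_apply, smul_sub, sub_eq_add_neg, toCircle_add, Circle.coe_mul, fourier_neg']
  rfl

noncomputable def dirichletKernel (N : ℕ) : C(AddCircle T, ℂ) := ∑ n ∈ Icc (-(N : ℤ)) N, fourier n

lemma dirichletKernel_apply (N : ℕ) (x : AddCircle T) :
    dirichletKernel N x = ∑ n ∈ Icc (-(N : ℤ)) N, fourier n x := by
  simp [dirichletKernel]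

lemma dirichletKernel_zero (N : ℕ) : dirichletKernel N (0 : AddCircle T) = 2 * N + 1 := by
  simp only [dirichletKernel_apply, fourier_eval_zero, sum_const, card_Icc_neg_self, nsmul_one]
  push_cast; rfl

lemma inv_smul_dirichletKernel_zero (N : ℕ) :
    (2 * N + 1 : ℝ)⁻¹ • dirichletKernel N (0 : AddCircle T) = 1 := by
  rw [dirichletKernel_zero, Complex.real_smul, Complex.ofReal_inv]
  push_cast
  exact inv_mul_cancel₀ (by norm_cast)

lemma norm_dirichletKernel_le (N : ℕ) (x : AddCircle T) : ‖dirichletKernel N x‖ ≤ 2 * N + 1 := by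
  rw [dirichletKernel_apply]
  calc _ ≤ ∑ n ∈ Icc (-(N : ℤ)) N, ‖fourier n x‖ := norm_sum_le _ _
    _ = 2 * N + 1 := by
      simp only [fourier_apply, Circle.norm_coe, sum_const, card_Icc_neg_self, nsmul_one]
      push_cast; rfl

lemma dirichletKernel_mul_toCircle_sub_one (N : ℕ) (x : AddCircle T) :
    dirichletKernel N x * (toCircle x - 1) = fourier (N + 1) x - fourier (-N) x := by
  have hx : (toCircle x : ℂ) ≠ 0 := Circle.coe_ne_zero _
  have hN : ((N : ℤ) + 1) = ((N + 1 : ℕ) : ℤ) := by push_cast; rfl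
  simp only [dirichletKernel_apply, sum_Icc_neg_self_eq_sum_range, fourier_apply_eq_zpow,
    zpow_sub₀ hx, zpow_natCast, ← sum_div, div_mul_eq_mul_div, geom_sum_mul, hN, zpow_neg]
  field_simp
  ring

lemma norm_dirichletKernel_le_of_toCircle_ne_one (N : ℕ) {x : AddCircle T}
    (hx : toCircle x ≠ 1) : ‖dirichletKernel N x‖ ≤ 2 / ‖(toCircle x : ℂ) - 1‖ := by
  have hpos : 0 < ‖(toCircle x : ℂ) - 1‖ :=
    norm_pos_iff.2 <| sub_ne_zero.2 <| Circle.coe_eq_one.not.2 hx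
  rw [le_div_iff₀ hpos, ← norm_mul, dirichletKernel_mul_toCircle_sub_one]
  calc _ ≤ ‖fourier (N + 1) x‖ + ‖fourier (-N) x‖ := norm_sub_le _ _
    _ = 2 := by simp only [fourier_apply, Circle.norm_coe]; norm_num

lemma tendsto_inv_smul_dirichletKernel_of_ne_zero (hT : T ≠ 0) {x : AddCircle T} (hx : x ≠ 0) :
    Tendsto (fun N : ℕ => (2 * N + 1 : ℝ)⁻¹ • dirichletKernel N x) atTop (𝓝 0) := by
  have hx' : toCircle x ≠ 1 := by
    rwa [← toCircle_zero, (injective_toCircle hT).ne_iff]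
  have hden : Tendsto (fun N : ℕ => (2 * N + 1 : ℝ)) atTop atTop :=
    tendsto_atTop_add_const_right _ _ (tendsto_natCast_atTop_atTop.const_mul_atTop two_pos)
  have hbound := (tendsto_inv_atTop_zero.comp hden).mul_const (2 / ‖(toCircle x : ℂ) - 1‖)
  rw [zero_mul] at hbound
  refine squeeze_zero_norm (fun N => ?_) hbound
  rw [norm_smul, Real.norm_of_nonneg (by positivity)]
  exact mul_le_mul_of_nonneg_left (norm_dirichletKernel_le_of_toCircle_ne_one N hx')
    (by positivity)

section Measure

variable (μ : Measure (AddCircle T))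

lemma integral_fourier_sub_prod [SFinite μ] (n : ℤ) :
    ∫ p, fourier n (p.1 - p.2) ∂μ.prod μ = ((‖∫ t, fourier n t ∂μ‖ ^ 2 : ℝ) : ℂ) := by
  simp_rw [fourier_sub]
  rw [integral_prod_mul (fourier n ·) (conj <| fourier n ·), integral_conj, Complex.mul_conj,
    Complex.normSq_eq_norm_sq]

lemma integral_dirichletKernel_sub_prod [IsFiniteMeasure μ] (N : ℕ) :
    ∫ p, dirichletKernel N (p.1 - p.2) ∂μ.prod μ =
      ((∑ n ∈ Icc (-(N : ℤ)) N, ‖∫ t, fourier n t ∂μ‖ ^ 2 : ℝ) : ℂ) := by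
  have hint (n : ℤ) : Integrable (fun p : AddCircle T × AddCircle T => fourier n (p.1 - p.2))
      (μ.prod μ) :=
    .of_bound (by fun_prop) 1 <| .of_forall fun p => by simp [fourier_apply, Circle.norm_coe]
  simp_rw [dirichletKernel_apply]
  rw [integral_finsetSum _ fun n _ => hint n, Complex.ofReal_sum]
  exact sum_congr rfl fun n _ => integral_fourier_sub_prod μ n

lemma tendsto_cesaro_norm_sq_integral_fourier (hT : T ≠ 0) [IsFiniteMeasure μ] :
    Tendsto (fun N : ℕ => 1 / (2 * (N : ℝ) + 1) *
        ∑ n ∈ Icc (-(N : ℤ)) N, ‖∫ t, fourier n t ∂μ‖ ^ 2)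
      atTop (𝓝 ((μ.prod μ).real (Set.diagonal _))) := by
  have hlim := tendsto_integral_of_dominated_convergence (μ := μ.prod μ)
    (F := fun (N : ℕ) (p : AddCircle T × AddCircle T) =>
      (2 * N + 1 : ℝ)⁻¹ • dirichletKernel N (p.1 - p.2))
    (f := (Set.diagonal _).indicator fun _ => 1) (fun _ => 1) (fun N => by fun_prop)
    (integrable_const 1)
    (fun N => .of_forall fun p => by
      rw [norm_smul, Real.norm_of_nonneg (by positivity)]
      exact inv_mul_le_one_of_le₀ (norm_dirichletKernel_le N _) (by positivity))
    (.of_forall fun p => by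
      rcases eq_or_ne p.1 p.2 with h | h
      · rw [Set.indicator_of_mem (show p ∈ Set.diagonal _ from h)]
        simp only [h, sub_self, inv_smul_dirichletKernel_zero, tendsto_const_nhds]
      · rw [Set.indicator_of_notMem (show p ∉ Set.diagonal _ from h)]
        exact tendsto_inv_smul_dirichletKernel_of_ne_zero hT (sub_ne_zero.2 h))
  simp_rw [integral_smul, integral_dirichletKernel_sub_prod,
    integral_indicator_const _ measurableSet_diagonal, Complex.real_smul, mul_one] at hlim
  refine tendsto_ofReal_iff.1 (hlim.congr fun N => ?_)
  push_cast
  ring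

end Measure

end AddCircle

/-- A finite positive Borel measure `μ` on the circle `S¹ = ℝ/ℤ` is non-atomic if and only
if the symmetric Cesàro averages of `|μ̂(n)|²` converge to `0`. -/
theorem nonatomic_iff_cesaro_fourier_sq_tendsto_zero
    (μ : Measure (AddCircle (1 : ℝ))) [IsFiniteMeasure μ] :
    (∀ t : AddCircle (1 : ℝ), μ {t} = 0) ↔
      Tendsto
        (fun N : ℕ => (1 / (2 * (N : ℝ) + 1)) *
          ∑ n ∈ Finset.Icc (-(N : ℤ)) (N : ℤ), ‖∫ t, fourier n t ∂μ‖ ^ 2)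
        atTop (nhds 0) := by
  have hlim := AddCircle.tendsto_cesaro_norm_sq_integral_fourier μ one_ne_zero
  rw [← Measure.prod_self_diagonal_eq_zero_iff, ← measureReal_eq_zero_iff]
  exact ⟨fun h => h ▸ hlim, tendsto_nhds_unique hlim⟩
end

section
/- Let μ be a finite positive Borel measure on the circle S¹. Suppose there exists a sequence of continuous functions u_p : S¹ → ℂ with |u_p(s)| = 1 for all s ∈ S¹ and all p, such that for every j ∈ ℤ, ∫_{S¹} e^{2πijs} u_p(s) dμ(s) → 0 as p → ∞. Then μ is non-atomic, i.e., μ({t}) = 0 for every t ∈ S¹. -/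
/-!
The functionals `f ↦ ∫ f u_p dμ` on `C(S¹, ℂ)` have norm at most `μ(S¹)`, so the set of `f` on
which they tend to zero is a closed subspace; it contains the characters, whose span is dense,
hence it is everything. An atom at `t` rules this out: for a continuous bump `f` with `f t = 1`
supported in a ball around `t` of measure less than `2 μ{t}`, the atom contributes `μ{t}` to
`|∫ f u_p dμ|` and the rest of the ball less than `μ{t}`, uniformly in `p`.
-/

open MeasureTheory Filter Topology Metric Set Submodule

theorem ContinuousLinearMap.tendsto_zero_of_dense_span {𝕜 E F ι : Type*}
    [NontriviallyNormedField 𝕜] [SeminormedAddCommGroup E] [NormedSpace 𝕜 E]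
    [SeminormedAddCommGroup F] [NormedSpace 𝕜 F] {l : Filter ι} (T : ι → E →L[𝕜] F)
    (hT : ∃ C, ∀ i, ‖T i‖ ≤ C) {s : Set E} (hs : Dense (span 𝕜 s : Set E))
    (h : ∀ x ∈ s, Tendsto (T · x) l (𝓝 0)) (x : E) : Tendsto (T · x) l (𝓝 0) := by
  have hequi : Equicontinuous ((↑) ∘ T : ι → E → F) :=
    ((NormedSpace.equicontinuous_TFAE T).out 5 1).mp hT
  have hclosed : IsClosed {x | Tendsto (T · x) l (𝓝 0)} :=
    hequi.isClosed_setOfPred_tendsto (f := fun _ => 0) continuous_const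
  have hspan : ∀ y ∈ span 𝕜 s, Tendsto (T · y) l (𝓝 0) := by
    intro y hy
    induction hy using span_induction with
    | mem y hy => exact h y hy
    | zero => simpa using tendsto_const_nhds
    | add y z _ _ hy hz => simpa using hy.add hz
    | smul c y _ hy => simpa using hy.const_smul c
  exact hclosed.closure_subset_iff.mpr hspan (hs x)

namespace ContinuousMap

variable {X 𝕜 : Type*} [TopologicalSpace X] [CompactSpace X] [MeasurableSpace X]
  [OpensMeasurableSpace X] [RCLike 𝕜] (μ : Measure X) [IsFiniteMeasure μ]

theorem integrable_mul (f v : C(X, 𝕜)) : Integrable (fun x => f x * v x) μ :=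
  (f * v).continuous.integrable_of_hasCompactSupport (HasCompactSupport.of_compactSpace _)

noncomputable def integralMulCLM (v : C(X, 𝕜)) : C(X, 𝕜) →L[𝕜] 𝕜 :=
  LinearMap.mkContinuous
    { toFun f := ∫ x, f x * v x ∂μ
      map_add' f g := by
        simp only [coe_add, Pi.add_apply, add_mul]
        exact integral_add (integrable_mul μ f v) (integrable_mul μ g v)
      map_smul' c f := by
        simp only [coe_smul, Pi.smul_apply, smul_eq_mul, mul_assoc, RingHom.id_apply]
        exact integral_const_mul c _ }
    (μ.real univ * ‖v‖) fun f => by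
      refine (norm_integral_le_of_norm_le_const (C := ‖v‖ * ‖f‖)
        (Eventually.of_forall fun x => ?_)).trans_eq (by ring)
      rw [norm_mul, mul_comm ‖v‖]
      exact mul_le_mul (norm_coe_le_norm f x) (norm_coe_le_norm v x) (norm_nonneg _)
        (norm_nonneg _)

theorem norm_integralMulCLM_le (v : C(X, 𝕜)) : ‖integralMulCLM μ v‖ ≤ μ.real univ * ‖v‖ :=
  LinearMap.mkContinuous_norm_le _ (by positivity) _

theorem tendsto_integral_mul_of_dense_span {ι : Type*} {l : Filter ι} (u : ι → C(X, 𝕜))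
    (hu : ∃ C, ∀ i, ‖u i‖ ≤ C) {s : Set C(X, 𝕜)} (hs : Dense (span 𝕜 s : Set C(X, 𝕜)))
    (h : ∀ g ∈ s, Tendsto (fun i => ∫ x, g x * u i x ∂μ) l (𝓝 0)) (f : C(X, 𝕜)) :
    Tendsto (fun i => ∫ x, f x * u i x ∂μ) l (𝓝 0) := by
  obtain ⟨C, hC⟩ := hu
  refine ContinuousLinearMap.tendsto_zero_of_dense_span (fun i => integralMulCLM μ (u i))
    ⟨μ.real univ * C, fun i => ?_⟩ hs h f
  exact (norm_integralMulCLM_le μ (u i)).trans (by gcongr; exact hC i)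

end ContinuousMap

section Atom

variable {X : Type*} [MeasurableSpace X]

theorem norm_integral_sub_measureReal_singleton_smul_le {E : Type*} [MeasurableSingletonClass X]
    [NormedAddCommGroup E] [NormedSpace ℝ E] [CompleteSpace E]
    (μ : Measure X) [IsFiniteMeasure μ] {g : X → E} (hg : Integrable g μ) (hg1 : ∀ x, ‖g x‖ ≤ 1)
    {s : Set X} (hgs : ∀ x ∉ s, g x = 0) (t : X) :
    ‖∫ x, g x ∂μ - μ.real {t} • g t‖ ≤ μ.real (s \ {t}) := by
  have hsplit : ∫ x, g x ∂μ - μ.real {t} • g t = ∫ x in s \ {t}, g x ∂μ := by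
    rw [← integral_add_compl (measurableSet_singleton t) hg, integral_singleton,
      add_sub_cancel_left, setIntegral_eq_of_subset_of_forall_sdiff_eq_zero
        (measurableSet_singleton t).compl (fun x (hx : x ∈ s \ {t}) => hx.2)
        (fun x hx => hgs x fun hxs => hx.2 ⟨hxs, hx.1⟩)]
  rw [hsplit]
  simpa using norm_setIntegral_le_of_norm_le_const (measure_lt_top μ _) fun x _ => hg1 x

variable [MetricSpace X] [OpensMeasurableSpace X] (μ : Measure X) [IsFiniteMeasure μ]

theorem exists_pos_measureReal_ball_lt_two_mul {t : X} (ht : μ {t} ≠ 0) :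
    ∃ r > 0, μ.real (ball t r) < 2 * μ.real {t} := by
  have hlim : Tendsto (fun r => μ.real (ball t r)) (𝓝[>] 0) (𝓝 (μ.real {t})) := by
    have := tendsto_measure_thickening (μ := μ) (s := {t}) ⟨1, one_pos, measure_ne_top μ _⟩
    simp only [thickening_singleton, closure_singleton] at this
    exact (ENNReal.tendsto_toReal (measure_ne_top μ _)).comp this
  have hpos : 0 < μ.real {t} := ENNReal.toReal_pos ht (measure_ne_top μ _)
  exact ((eventually_mem_nhdsWithin (a := (0 : ℝ)) (s := Ioi 0)).and
    (hlim.eventually (gt_mem_nhds (lt_two_mul_self hpos)))).exists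

theorem exists_le_norm_integral_mul_of_measure_singleton_ne_zero {𝕜 : Type*} [RCLike 𝕜] {t : X}
    (ht : μ {t} ≠ 0) :
    ∃ f : C(X, 𝕜), ∃ c > 0, ∀ v : X → 𝕜, AEStronglyMeasurable v μ → (∀ x, ‖v x‖ ≤ 1) →
      ‖v t‖ = 1 → c ≤ ‖∫ x, f x * v x ∂μ‖ := by
  obtain ⟨r, hr, hball⟩ := exists_pos_measureReal_ball_lt_two_mul μ ht
  obtain ⟨φ, hφ0, hφ1, hφ01⟩ := exists_continuous_zero_one_of_isClosed
    isOpen_ball.isClosed_compl (isClosed_singleton (x := t))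
    (disjoint_compl_left_iff_subset.mpr (singleton_subset_iff.mpr (mem_ball_self hr)))
  refine ⟨⟨fun x => (φ x : 𝕜), RCLike.continuous_ofReal.comp φ.continuous⟩,
    2 * μ.real {t} - μ.real (ball t r), by linarith, fun v hv hv1 hvt => ?_⟩
  set g : X → 𝕜 := fun x => (φ x : 𝕜) * v x
  have hg1 : ∀ x, ‖g x‖ ≤ 1 := fun x => by
    rw [norm_mul, RCLike.norm_ofReal, abs_of_nonneg (hφ01 x).1]
    exact mul_le_one₀ (hφ01 x).2 (norm_nonneg _) (hv1 x)
  have hg : Integrable g μ :=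
    .of_bound ((RCLike.continuous_ofReal.comp φ.continuous).aestronglyMeasurable.mul hv) 1
      (Eventually.of_forall hg1)
  have hgs : ∀ x ∉ ball t r, g x = 0 := fun x hx => by simp [g, hφ0 hx]
  have hatom : ‖μ.real {t} • g t‖ = μ.real {t} := by
    rw [norm_smul, Real.norm_of_nonneg measureReal_nonneg]
    simp [g, hφ1 rfl, hvt]
  have hdiff : μ.real (ball t r \ {t}) = μ.real (ball t r) - μ.real {t} :=
    measureReal_sdiff (singleton_subset_iff.mpr (mem_ball_self hr)) (measurableSet_singleton t)
  change _ ≤ ‖∫ x, g x ∂μ‖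
  calc 2 * μ.real {t} - μ.real (ball t r)
      = ‖μ.real {t} • g t‖ - μ.real (ball t r \ {t}) := by rw [hatom, hdiff]; ring
    _ ≤ ‖μ.real {t} • g t‖ - ‖∫ x, g x ∂μ - μ.real {t} • g t‖ := by
        gcongr
        exact norm_integral_sub_measureReal_singleton_smul_le μ hg hg1 hgs t
    _ ≤ ‖∫ x, g x ∂μ‖ := by
        rw [norm_sub_rev]
        linarith [norm_sub_norm_le (μ.real {t} • g t) (∫ x, g x ∂μ)]

end Atom

/-- If there is a sequence of unimodular continuous functions `u_p` on the circle such that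
`∫ e^{2πijs} u_p(s) dμ(s) → 0` for every `j ∈ ℤ`, then the finite measure `μ` is non-atomic. -/
theorem nonatomic_of_unimodular_sequence
    (μ : Measure (AddCircle (1 : ℝ))) [IsFiniteMeasure μ]
    (u : ℕ → C(AddCircle (1 : ℝ), ℂ))
    (hu : ∀ (p : ℕ) (s : AddCircle (1 : ℝ)), ‖u p s‖ = 1)
    (h : ∀ j : ℤ, Tendsto (fun p : ℕ => ∫ s, fourier j s * u p s ∂μ) atTop (nhds 0)) :
    ∀ t : AddCircle (1 : ℝ), μ {t} = 0 := by
  have hbounded : ∃ C, ∀ p, ‖u p‖ ≤ C :=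
    ⟨1, fun p => (ContinuousMap.norm_le _ zero_le_one).mpr fun s => (hu p s).le⟩
  have hdense : Dense (span ℂ (range (fourier (T := 1))) : Set C(AddCircle (1 : ℝ), ℂ)) :=
    dense_iff_topologicalClosure_eq_top.mpr span_fourier_closure_eq_top
  have hvanish := ContinuousMap.tendsto_integral_mul_of_dense_span μ u hbounded hdense
    (forall_mem_range.mpr h)
  intro t
  by_contra ht
  obtain ⟨f, c, hc, hf⟩ := exists_le_norm_integral_mul_of_measure_singleton_ne_zero (𝕜 := ℂ) μ ht
  obtain ⟨p, hp⟩ := ((hvanish f).norm.eventually (gt_mem_nhds (by rwa [norm_zero]))).exists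
  exact (hf (u p) (u p).continuous.aestronglyMeasurable (fun s => (hu p s).le) (hu p t)).not_gt hp
end

section
/- Let K be a compact Hausdorff abelian topological group with normalized Haar probability measure λ_K, let μ be a finite positive Borel measure on K, and let S : K × K → K × K be the homeomorphism S(ψ, χ) = (χ, χψ). Then: (1) for all continuous characters a, b : K → S¹, ∫_{K×K} a(x) b(y) d(S_*(μ ⊗ λ_K))(x, y) equals ∫_K b(ψ) dμ(ψ) if the character a·b is trivial, and equals 0 otherwise; (2) S_*(μ ⊗ λ_K)(Δ(K)) = μ({1}), where Δ(K) = {(x,x) : x ∈ K} is the diagonal and 1 is the identity element of K. In particular, if μ({1}) = 0 then S_*(μ ⊗ λ_K) gives the diagonal measure zero. -/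
/-!
Substituting `S(ψ, χ) = (χ, χψ)` turns the integrand `a(x) b(y)` into `b(ψ) · (a b)(χ)`, a product
of functions of the two coordinates separately, so Fubini gives `(∫ b dμ) (∫ a b dλ_K)`. By
invariance of Haar measure, `∫ a b dλ_K` is `1` when `a b` is trivial and `0` otherwise. Finally
`S(ψ, χ)` lies on the diagonal exactly when `ψ = 1`, so `S⁻¹(Δ) = {1} × K`.
-/

open MeasureTheory

section Shear

variable (G : Type*) [Group G] [MeasurableSpace G] [MeasurableMul₂ G] [MeasurableInv G]

def shear : G × G ≃ᵐ G × G :=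
  MeasurableEquiv.prodComm.trans (MeasurableEquiv.shearMulRight G)

@[simp]
lemma shear_apply (p : G × G) : shear G p = (p.2, p.2 * p.1) := rfl

lemma shear_preimage_diagonal : shear G ⁻¹' Set.diagonal G = {1} ×ˢ Set.univ := by
  ext ⟨ψ, χ⟩
  simp

variable {G}

lemma integral_map_shear_mul {𝕜 : Type*} [RCLike 𝕜] (μ ν : Measure G) [SFinite μ] [SFinite ν]
    (a b : G →* 𝕜) :
    ∫ p, a p.1 * b p.2 ∂(μ.prod ν).map (shear G) = (∫ ψ, b ψ ∂μ) * ∫ χ, (a * b) χ ∂ν := by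
  rw [integral_map_equiv, ← integral_prod_mul]
  congr 1 with p
  simp only [shear_apply, map_mul, MonoidHom.mul_apply]
  ring

lemma measure_map_shear_diagonal (μ ν : Measure G) [IsProbabilityMeasure ν] :
    (μ.prod ν).map (shear G) (Set.diagonal G) = μ {1} := by
  rw [MeasurableEquiv.map_apply, shear_preimage_diagonal, Measure.prod_prod, measure_univ, mul_one]

end Shear

lemma MonoidHom.integral_eq_zero_of_ne_one {G 𝕜 : Type*} [Group G] [MeasurableSpace G]
    [MeasurableMul G] [RCLike 𝕜] (ν : Measure G) [ν.IsMulLeftInvariant] {χ : G →* 𝕜}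
    (hχ : χ ≠ 1) : ∫ x, χ x ∂ν = 0 := by
  obtain ⟨g, hg⟩ : ∃ g, χ g ≠ 1 := by simpa [DFunLike.ext_iff] using hχ
  have h : χ g * ∫ x, χ x ∂ν = ∫ x, χ x ∂ν := by
    simpa only [map_mul, integral_const_mul] using integral_mul_left_eq_self (μ := ν) χ g
  have : (χ g - 1) * ∫ x, χ x ∂ν = 0 := by rw [sub_mul, one_mul, h, sub_self]
  exact (mul_eq_zero.1 this).resolve_left (sub_ne_zero.2 hg)

theorem pushforward_product_haar_characters_and_diagonal_general
    (K : Type*) [CommGroup K] [TopologicalSpace K] [IsTopologicalGroup K]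
    [SecondCountableTopology K]
    [MeasurableSpace K] [BorelSpace K]
    (lamK : Measure K) [lamK.IsHaarMeasure] [IsProbabilityMeasure lamK]
    (μ : Measure K) [IsFiniteMeasure μ] :
    (∀ a b : ContinuousMonoidHom K Circle, (∀ x : K, a x * b x = 1) →
      ∫ p : K × K, ((a p.1 : ℂ) * (b p.2 : ℂ))
          ∂(Measure.map (fun p : K × K => (p.2, p.2 * p.1)) (μ.prod lamK))
        = ∫ ψ, (b ψ : ℂ) ∂μ) ∧
    (∀ a b : ContinuousMonoidHom K Circle, ¬ (∀ x : K, a x * b x = 1) →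
      ∫ p : K × K, ((a p.1 : ℂ) * (b p.2 : ℂ))
          ∂(Measure.map (fun p : K × K => (p.2, p.2 * p.1)) (μ.prod lamK))
        = 0) ∧
    (Measure.map (fun p : K × K => (p.2, p.2 * p.1)) (μ.prod lamK))
        {p : K × K | p.1 = p.2} = μ {1} := by
  let toComplex (a : ContinuousMonoidHom K Circle) : K →* ℂ :=
    { toFun x := (a x : ℂ), map_one' := by simp, map_mul' := by simp }
  have product_char_eq_one_iff (a b : ContinuousMonoidHom K Circle) :
      toComplex a * toComplex b = 1 ↔ ∀ x, a x * b x = 1 := by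
    simp [toComplex, DFunLike.ext_iff, ← Circle.coe_mul, Circle.coe_eq_one]
  refine ⟨fun a b hab => ?_, fun a b hab => ?_, measure_map_shear_diagonal μ lamK⟩
  · refine (integral_map_shear_mul μ lamK (toComplex a) (toComplex b)).trans ?_
    simp [(product_char_eq_one_iff a b).2 hab, toComplex]
  · refine (integral_map_shear_mul μ lamK (toComplex a) (toComplex b)).trans ?_
    rw [MonoidHom.integral_eq_zero_of_ne_one lamK (mt (product_char_eq_one_iff a b).1 hab), mul_zero]

/-- Let `K` be a compact Hausdorff abelian group with normalized Haar probability measure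
`λ_K`, `μ` a finite positive Borel measure on `K`, and `S(ψ,χ) = (χ, χψ)`. Then
(1) for continuous characters `a, b` of `K`, `∫ a(x)b(y) d(S_*(μ ⊗ λ_K))` equals `∫ b dμ`
if `a·b` is trivial and `0` otherwise; and (2) `S_*(μ ⊗ λ_K)` gives the diagonal mass
`μ({1})`; in particular the diagonal is null when `μ({1}) = 0`. -/
theorem pushforward_product_haar_characters_and_diagonal
    (K : Type*) [CommGroup K] [TopologicalSpace K] [IsTopologicalGroup K]
    [CompactSpace K] [T2Space K] [SecondCountableTopology K]
    [MeasurableSpace K] [BorelSpace K]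
    (lamK : Measure K) [lamK.IsHaarMeasure] [IsProbabilityMeasure lamK]
    (μ : Measure K) [IsFiniteMeasure μ] :
    (∀ a b : ContinuousMonoidHom K Circle, (∀ x : K, a x * b x = 1) →
      ∫ p : K × K, ((a p.1 : ℂ) * (b p.2 : ℂ))
          ∂(Measure.map (fun p : K × K => (p.2, p.2 * p.1)) (μ.prod lamK))
        = ∫ ψ, (b ψ : ℂ) ∂μ) ∧
    (∀ a b : ContinuousMonoidHom K Circle, ¬ (∀ x : K, a x * b x = 1) →
      ∫ p : K × K, ((a p.1 : ℂ) * (b p.2 : ℂ))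
          ∂(Measure.map (fun p : K × K => (p.2, p.2 * p.1)) (μ.prod lamK))
        = 0) ∧
    (Measure.map (fun p : K × K => (p.2, p.2 * p.1)) (μ.prod lamK))
        {p : K × K | p.1 = p.2} = μ {1} :=
  pushforward_product_haar_characters_and_diagonal_general K lamK μ
end
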